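/- arXiv:2402.12852 — 3 statements merged into one kernel-verified Lean document; each statement's English description precedes it below -/
import Mathlib

section
/- Suppose differentiable functions σ_Π, σ_Φ : ℝ → ℝ with σ_Π > 0 satisfy the coupled system σ_Π'(t) = L · σ_Π(t)^{2−2/L} · σ_Φ(t) · a(t) and σ_Φ'(t) = σ_Π(t) · a(t) for a common continuous function a(t) and integer L ≥ 1. Then σ_Φ(t)² − σ_Π(t)^{2/L} is constant in t. -/
/-! With `p = 2/L` the exponents `p - 1` and `2 - p` of `σΠ` add up to `1`, so
`d/dt σΠ^p = p σΠ^(p-1) · L σΠ^(2-p) σΦ a = 2 σΠ σΦ a`, which is also `d/dt σΦ²`.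
Hence `σΦ² - σΠ^p` has zero derivative. -/

theorem Real.rpow_sub_one_mul_rpow_two_sub {x : ℝ} (hx : 0 < x) (p : ℝ) :
    x ^ (p - 1) * x ^ (2 - p) = x := by
  rw [← Real.rpow_add hx]
  norm_num

theorem hasDerivAt_sq_sub_rpow_eq_zero {f g : ℝ → ℝ} {k p c t : ℝ} (hkp : k * p = 2)
    (hf_pos : 0 < f t) (hf : HasDerivAt f (k * f t ^ (2 - p) * g t * c) t)
    (hg : HasDerivAt g (f t * c) t) :
    HasDerivAt (fun t => g t ^ 2 - f t ^ p) 0 t := by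
  have hsq : HasDerivAt (fun t => g t ^ 2) (2 * f t * g t * c) t :=
    (hg.fun_pow 2).congr_deriv (by push_cast; ring)
  have hrpow : HasDerivAt (fun t => f t ^ p) (2 * f t * g t * c) t := by
    refine (hf.rpow_const (p := p) (Or.inl hf_pos.ne')).congr_deriv ?_
    calc _ = k * p * (f t ^ (p - 1) * f t ^ (2 - p)) * g t * c := by ring
      _ = 2 * f t * g t * c := by rw [hkp, Real.rpow_sub_one_mul_rpow_two_sub hf_pos]
  simpa using hsq.fun_sub hrpow

theorem stmt3_general (sPi sPhi a : ℝ → ℝ) (hPi : Differentiable ℝ sPi)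
    (hPhi : Differentiable ℝ sPhi)
    (hpos : ∀ t, 0 < sPi t) (L : ℕ) (hL : 1 ≤ L)
    (hode1 : ∀ t, deriv sPi t =
      (L : ℝ) * sPi t ^ ((2 : ℝ) - 2 / L) * sPhi t * a t)
    (hode2 : ∀ t, deriv sPhi t = sPi t * a t) :
    ∀ s t : ℝ, (sPhi t) ^ 2 - sPi t ^ ((2 : ℝ) / L) =
      (sPhi s) ^ 2 - sPi s ^ ((2 : ℝ) / L) := by
  have hkp : (L : ℝ) * (2 / L) = 2 := by
    have : (L : ℝ) ≠ 0 := Nat.cast_ne_zero.mpr (by omega)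
    field_simp
  have hconst : ∀ t, HasDerivAt (fun t => sPhi t ^ 2 - sPi t ^ ((2 : ℝ) / L)) 0 t := fun t =>
    hasDerivAt_sq_sub_rpow_eq_zero hkp (hpos t) (hode1 t ▸ (hPi t).hasDerivAt)
      (hode2 t ▸ (hPhi t).hasDerivAt)
  intro s t
  exact is_const_of_deriv_eq_zero (fun x => (hconst x).differentiableAt)
    (fun x => (hconst x).deriv) t s

/-- If `σΠ' = L σΠ^{2-2/L} σΦ a` and `σΦ' = σΠ a` with `σΠ > 0`, then
`σΦ² − σΠ^{2/L}` is constant in `t`.  Here `sPi = σΠ`, `sPhi = σΦ`. -/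
theorem stmt3 (sPi sPhi a : ℝ → ℝ) (hPi : Differentiable ℝ sPi)
    (hPhi : Differentiable ℝ sPhi) (ha : Continuous a)
    (hpos : ∀ t, 0 < sPi t) (L : ℕ) (hL : 1 ≤ L)
    (hode1 : ∀ t, deriv sPi t =
      (L : ℝ) * sPi t ^ ((2 : ℝ) - 2 / L) * sPhi t * a t)
    (hode2 : ∀ t, deriv sPhi t = sPi t * a t) :
    ∀ s t : ℝ, (sPhi t) ^ 2 - sPi t ^ ((2 : ℝ) / L) =
      (sPhi s) ^ 2 - sPi s ^ ((2 : ℝ) / L) :=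
  stmt3_general sPi sPhi a hPi hPhi hpos L hL hode1 hode2
end

section
/- Let W₁(t), …, W_L(t) be differentiable matrix-valued curves satisfying the gradient flow Ẇ_i(t) = −∂ℓ/∂W_i evaluated at (W_L(t)⋯W_1(t)) via the chain rule, i.e., Ẇ_i = −(W_L⋯W_{i+1})ᵀ G (W_{i−1}⋯W_1)ᵀ where G = ∂ℓ/∂Π at Π = W_L⋯W_1. If at time 0 the balancedness condition W_i(0) W_i(0)ᵀ = W_{i+1}(0)ᵀ W_{i+1}(0) holds for all i ∈ {1,…,L−1}, then this condition holds for all t ≥ 0. -/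
open Matrix

/-- The product `W b * W (b-1) * ⋯ * W (a+1)` of a family of square matrices,
taken with indices descending from `b - 1` down to `a` (so
`descProd W a b = W (b-1) * ⋯ * W a`). -/
def descProd (n : ℕ) (W : ℕ → Matrix (Fin n) (Fin n) ℝ) (a b : ℕ) :
    Matrix (Fin n) (Fin n) ℝ :=
  (((List.range' a (b - a)).reverse).map W).prod

/-! Balancedness `Wᵢ Wᵢᵀ = Wᵢ₊₁ᵀ Wᵢ₊₁` is a conservation law because the two layer gradients
satisfy `Ẇᵢ Wᵢᵀ = Wᵢ₊₁ᵀ Ẇᵢ₊₁ = -(W_L⋯W_{i+1})ᵀ G (W_i⋯W_1)ᵀ`. Writing `X` for this matrix, the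
derivative of `Wᵢ Wᵢᵀ - Wᵢ₊₁ᵀ Wᵢ₊₁` is `(X + Xᵀ) - (Xᵀ + X) = 0`. -/

section descProd

variable {n : ℕ} (W : ℕ → Matrix (Fin n) (Fin n) ℝ)

lemma descProd_succ_right {a b : ℕ} (h : a ≤ b) :
    descProd n W a (b + 1) = W b * descProd n W a b := by
  unfold descProd
  rw [show b + 1 - a = b - a + 1 by omega, List.range'_concat,
    show a + 1 * (b - a) = b by omega]
  simp

lemma descProd_eq_mul_left {a b : ℕ} (h : a < b) :
    descProd n W a b = descProd n W (a + 1) b * W a := by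
  unfold descProd
  rw [show b - a = b - (a + 1) + 1 by omega, List.range'_succ]
  simp

end descProd

def layerGrad (n L : ℕ) (W : ℕ → Matrix (Fin n) (Fin n) ℝ) (G : Matrix (Fin n) (Fin n) ℝ)
    (i : ℕ) : Matrix (Fin n) (Fin n) ℝ :=
  -((descProd n W (i + 1) (L + 1))ᵀ * G * (descProd n W 1 i)ᵀ)

lemma layerGrad_mul_transpose {n L : ℕ} (W : ℕ → Matrix (Fin n) (Fin n) ℝ)
    (G : Matrix (Fin n) (Fin n) ℝ) {i : ℕ} (h1 : 1 ≤ i) (hiL : i < L) :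
    layerGrad n L W G i * (W i)ᵀ = (W (i + 1))ᵀ * layerGrad n L W G (i + 1) := by
  simp only [layerGrad, descProd_succ_right W h1,
    descProd_eq_mul_left W (by omega : i + 1 < L + 1), transpose_mul, neg_mul, mul_neg, Matrix.mul_assoc]

theorem Matrix.hasDerivAt_mul_apply {𝕜 : Type*} [NontriviallyNormedField 𝕜]
    {l m p : Type*} [Fintype m] {A : 𝕜 → Matrix l m 𝕜} {B : 𝕜 → Matrix m p 𝕜}
    {A' : Matrix l m 𝕜} {B' : Matrix m p 𝕜} {s : 𝕜}
    (hA : ∀ a b, HasDerivAt (fun u => A u a b) (A' a b) s)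
    (hB : ∀ a b, HasDerivAt (fun u => B u a b) (B' a b) s) (a : l) (c : p) :
    HasDerivAt (fun u => (A u * B u) a c) ((A' * B s + A s * B') a c) s := by
  simp only [mul_apply, add_apply, ← Finset.sum_add_distrib]
  exact HasDerivAt.fun_sum fun k _ => (hA a k).mul (hB k c)

theorem mul_transpose_sub_transpose_mul_eq {m : Type*} [Fintype m]
    {A B A' B' : ℝ → Matrix m m ℝ}
    (hA : ∀ s a b, HasDerivAt (fun u => A u a b) (A' s a b) s)
    (hB : ∀ s a b, HasDerivAt (fun u => B u a b) (B' s a b) s)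
    (hAB : ∀ s, A' s * (A s)ᵀ = (B s)ᵀ * B' s) (t s : ℝ) :
    A t * (A t)ᵀ - (B t)ᵀ * B t = A s * (A s)ᵀ - (B s)ᵀ * B s := by
  ext a b
  have hderiv : ∀ r, HasDerivAt (fun u => (A u * (A u)ᵀ - (B u)ᵀ * B u) a b) 0 r := by
    intro r
    have hAAt := hasDerivAt_mul_apply (B := fun u => (A u)ᵀ) (B' := (A' r)ᵀ) (hA r)
      (fun a b => hA r b a) a b
    have hBtB := hasDerivAt_mul_apply (A := fun u => (B u)ᵀ) (A' := (B' r)ᵀ)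
      (fun a b => hB r b a) (hB r) a b
    have hzero : A' r * (A r)ᵀ + A r * (A' r)ᵀ - ((B' r)ᵀ * B r + (B r)ᵀ * B' r) = 0 := by
      have hABt : A r * (A' r)ᵀ = (B' r)ᵀ * B r := by
        simpa [transpose_mul] using congrArg transpose (hAB r)
      rw [hAB r, hABt]
      abel
    refine (hAAt.fun_sub hBtB).congr_deriv ?_
    simpa only [Matrix.sub_apply, Matrix.add_apply, Matrix.zero_apply] using
      congrFun (congrFun hzero a) b
  exact is_const_of_deriv_eq_zero (fun r => (hderiv r).differentiableAt)
    (fun r => (hderiv r).deriv) t s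

theorem stmt10_general (n L : ℕ)
    (W : ℕ → ℝ → Matrix (Fin n) (Fin n) ℝ)
    (G : ℝ → Matrix (Fin n) (Fin n) ℝ)
    (hdiff : ∀ i a b, Differentiable ℝ fun t => W i t a b)
    (hflow : ∀ i, 1 ≤ i → i ≤ L → ∀ t (a b : Fin n),
      deriv (fun s => W i s a b) t =
        (-((descProd n (fun j => W j t) (i + 1) (L + 1))ᵀ * G t *
            (descProd n (fun j => W j t) 1 i)ᵀ)) a b)
    (hbal0 : ∀ i, 1 ≤ i → i < L →
      W i 0 * (W i 0)ᵀ = (W (i + 1) 0)ᵀ * W (i + 1) 0) :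
    ∀ t : ℝ, 0 ≤ t → ∀ i, 1 ≤ i → i < L →
      W i t * (W i t)ᵀ = (W (i + 1) t)ᵀ * W (i + 1) t := by
  intro t _ i h1 hiL
  have hderiv : ∀ j, 1 ≤ j → j ≤ L → ∀ s (a b : Fin n),
      HasDerivAt (fun u => W j u a b) (layerGrad n L (fun k => W k s) (G s) j a b) s :=
    fun j hj1 hjL s a b => by
      have := (hdiff j a b s).hasDerivAt
      rwa [hflow j hj1 hjL s a b] at this
  have hconst := mul_transpose_sub_transpose_mul_eq (hderiv i h1 hiL.le)
    (hderiv (i + 1) (by omega) hiL) (fun s => layerGrad_mul_transpose _ (G s) h1 hiL) t 0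
  rwa [hbal0 i h1 hiL, sub_self, sub_eq_zero] at hconst

/-- Balancedness is preserved under the gradient flow of a deep linear network:
if `Ẇᵢ = −(W_L⋯W_{i+1})ᵀ G (W_{i−1}⋯W_1)ᵀ` (with `G(t)` the loss gradient with
respect to the product) and `Wᵢ(0)Wᵢ(0)ᵀ = W_{i+1}(0)ᵀW_{i+1}(0)` for all
`1 ≤ i < L`, then the same holds at every `t ≥ 0`.  Layers are indexed `1,…,L`. -/
theorem stmt10 (n L : ℕ) (hL : 1 ≤ L)
    (W : ℕ → ℝ → Matrix (Fin n) (Fin n) ℝ)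
    (G : ℝ → Matrix (Fin n) (Fin n) ℝ) (hG : ∀ a b, Continuous fun t => G t a b)
    (hdiff : ∀ i a b, Differentiable ℝ fun t => W i t a b)
    (hflow : ∀ i, 1 ≤ i → i ≤ L → ∀ t (a b : Fin n),
      deriv (fun s => W i s a b) t =
        (-((descProd n (fun j => W j t) (i + 1) (L + 1))ᵀ * G t *
            (descProd n (fun j => W j t) 1 i)ᵀ)) a b)
    (hbal0 : ∀ i, 1 ≤ i → i < L →
      W i 0 * (W i 0)ᵀ = (W (i + 1) 0)ᵀ * W (i + 1) 0) :
    ∀ t : ℝ, 0 ≤ t → ∀ i, 1 ≤ i → i < L →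
      W i t * (W i t)ᵀ = (W (i + 1) t)ᵀ * W (i + 1) t :=
  stmt10_general n L W G hdiff hflow hbal0
end

section
/- In a two-layer linear network (L = 2) with balanced initialization W₁(0)W₁(0)ᵀ = W₂(0)ᵀW₂(0) evolving under the gradient flow Ẇ₁ = −W₂ᵀ G, Ẇ₂ = −G W₁ᵀ with G = G(t) = ∂ℓ/∂Π at Π = W₂W₁, the product Π = W₂W₁ satisfies Π̇ = −(ΠΠᵀ)^{1/2} G − G (ΠᵀΠ)^{1/2}. -/
open Matrix

section

open scoped ComplexOrder

/-- The positive semidefinite square root of a positive semidefinite matrix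
(the definition `Matrix.PosSemidef.sqrt` of the older Mathlib, since removed). -/
noncomputable def Matrix.PosSemidef.sqrt {n 𝕜 : Type*} [RCLike 𝕜] [Fintype n] [DecidableEq n]
    {A : Matrix n n 𝕜} (hA : A.PosSemidef) : Matrix n n 𝕜 :=
  hA.1.eigenvectorUnitary.1 * diagonal ((↑) ∘ (√·) ∘ hA.1.eigenvalues) *
    (star hA.1.eigenvectorUnitary : Matrix n n 𝕜)

end

/-! The gradient flow conserves the imbalance `W₁W₁ᵀ - W₂ᵀW₂`, since both terms have derivative
`-(W₂ᵀGW₁ᵀ + W₁GᵀW₂)`. So the network stays balanced, and then `ΠΠᵀ = W₂(W₁W₁ᵀ)W₂ᵀ = (W₂W₂ᵀ)²`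
and `ΠᵀΠ = (W₁ᵀW₁)²`. By uniqueness of positive semidefinite square roots, the product rule
`Π̇ = Ẇ₂W₁ + W₂Ẇ₁ = -GW₁ᵀW₁ - W₂W₂ᵀG` is the claimed formula. -/

namespace Matrix

variable {m n p : Type*}

section Sqrt

open scoped ComplexOrder

variable {𝕜 : Type*} [RCLike 𝕜]

open scoped MatrixOrder in
theorem PosSemidef.sqrt_eq_of_sq_eq [Fintype n] [DecidableEq n] {A B : Matrix n n 𝕜}
    (hA : A.PosSemidef) (hB : B.PosSemidef) (hAB : A ^ 2 = B) : hB.sqrt = A := by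
  have hcfc : hB.sqrt = CFC.sqrt B := by
    rw [CFC.sqrt_eq_real_sqrt B hB.nonneg, cfcₙ_eq_cfc, hB.1.cfc_eq]
    rfl
  rw [hcfc, CFC.sqrt_eq_iff B A hB.nonneg hA.nonneg, ← sq, hAB]

theorem sqrt_self_mul_conjTranspose_mul_of_balanced [Fintype m] [DecidableEq m] [Fintype n]
    [Fintype p] {A : Matrix m n 𝕜} {B : Matrix n p 𝕜} (hbal : B * Bᴴ = Aᴴ * A) :
    (posSemidef_self_mul_conjTranspose (A * B)).sqrt = A * Aᴴ :=
  (posSemidef_self_mul_conjTranspose A).sqrt_eq_of_sq_eq _ <| by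
    rw [sq, conjTranspose_mul, Matrix.mul_assoc A B, ← Matrix.mul_assoc B, hbal]
    simp only [Matrix.mul_assoc]

theorem sqrt_conjTranspose_mul_self_mul_of_balanced [Fintype m] [Fintype n] [Fintype p]
    [DecidableEq p] {A : Matrix m n 𝕜} {B : Matrix n p 𝕜} (hbal : B * Bᴴ = Aᴴ * A) :
    (posSemidef_conjTranspose_mul_self (A * B)).sqrt = Bᴴ * B :=
  (posSemidef_conjTranspose_mul_self B).sqrt_eq_of_sq_eq _ <| by
    rw [sq, conjTranspose_mul, Matrix.mul_assoc Bᴴ Aᴴ, ← Matrix.mul_assoc Aᴴ, ← hbal]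
    simp only [Matrix.mul_assoc]

end Sqrt

theorem hasDerivAt_mul_apply_s11 {𝕜 : Type*} [NontriviallyNormedField 𝕜] [Fintype n]
    {A : 𝕜 → Matrix m n 𝕜} {B : 𝕜 → Matrix n p 𝕜} {A' : Matrix m n 𝕜} {B' : Matrix n p 𝕜}
    {t : 𝕜} (hA : ∀ i j, HasDerivAt (fun s => A s i j) (A' i j) t)
    (hB : ∀ i j, HasDerivAt (fun s => B s i j) (B' i j) t) (i : m) (k : p) :
    HasDerivAt (fun s => (A s * B s) i k) ((A' * B t + A t * B') i k) t := by
  simp only [mul_apply, add_apply, ← Finset.sum_add_distrib]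
  exact HasDerivAt.fun_sum fun j _ => (hA i j).mul (hB j k)

theorem imbalance_eq_of_gradientFlow [Fintype m] [Fintype n] [Fintype p]
    {W₁ : ℝ → Matrix m n ℝ} {W₂ : ℝ → Matrix p m ℝ} {G : ℝ → Matrix p n ℝ}
    (hW₁ : ∀ t i j, HasDerivAt (fun s => W₁ s i j) ((-((W₂ t)ᵀ * G t)) i j) t)
    (hW₂ : ∀ t i j, HasDerivAt (fun s => W₂ s i j) ((-(G t * (W₁ t)ᵀ)) i j) t) (s t : ℝ) :
    W₁ t * (W₁ t)ᵀ - (W₂ t)ᵀ * W₂ t = W₁ s * (W₁ s)ᵀ - (W₂ s)ᵀ * W₂ s := by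
  ext i j
  have hderiv : ∀ t, HasDerivAt (fun s => (W₁ s * (W₁ s)ᵀ - (W₂ s)ᵀ * W₂ s) i j) 0 t := by
    intro t
    have h₁ := hasDerivAt_mul_apply_s11 (B := fun s => (W₁ s)ᵀ) (hW₁ t)
      (B' := (-((W₂ t)ᵀ * G t))ᵀ) (fun i j => hW₁ t j i) i j
    have h₂ := hasDerivAt_mul_apply_s11 (A := fun s => (W₂ s)ᵀ) (A' := (-(G t * (W₁ t)ᵀ))ᵀ)
      (fun i j => hW₂ t j i) (hW₂ t) i j
    refine (h₁.sub h₂).congr_deriv ?_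
    rw [← sub_apply]
    simp only [transpose_neg, transpose_mul, transpose_transpose, Matrix.neg_mul, Matrix.mul_neg,
      Matrix.mul_assoc]
    rw [add_comm, sub_self, zero_apply]
  exact is_const_of_deriv_eq_zero (fun s => (hderiv s).differentiableAt)
    (fun s => (hderiv s).deriv) t s

end Matrix

theorem stmt11_general {d h d' : ℕ}
    (W₁ : ℝ → Matrix (Fin h) (Fin d) ℝ) (W₂ : ℝ → Matrix (Fin d') (Fin h) ℝ)
    (G : ℝ → Matrix (Fin d') (Fin d) ℝ)
    (hW₁ : ∀ a b, Differentiable ℝ fun t => W₁ t a b)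
    (hW₂ : ∀ a b, Differentiable ℝ fun t => W₂ t a b)
    (hflow1 : ∀ t (a : Fin h) (b : Fin d),
      deriv (fun s => W₁ s a b) t = (-((W₂ t)ᵀ * G t)) a b)
    (hflow2 : ∀ t (a : Fin d') (b : Fin h),
      deriv (fun s => W₂ s a b) t = (-(G t * (W₁ t)ᵀ)) a b)
    (hbal : W₁ 0 * (W₁ 0)ᵀ = (W₂ 0)ᵀ * W₂ 0) :
    ∀ t (a : Fin d') (b : Fin d),
      deriv (fun s => (W₂ s * W₁ s) a b) t =
        (-((posSemidef_self_mul_conjTranspose (W₂ t * W₁ t)).sqrt * G t) -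
          G t * (posSemidef_conjTranspose_mul_self (W₂ t * W₁ t)).sqrt) a b := by
  intro t a b
  have hW₁' : ∀ t i j, HasDerivAt (fun s => W₁ s i j) ((-((W₂ t)ᵀ * G t)) i j) t :=
    fun t i j => hflow1 t i j ▸ (hW₁ i j t).hasDerivAt
  have hW₂' : ∀ t i j, HasDerivAt (fun s => W₂ s i j) ((-(G t * (W₁ t)ᵀ)) i j) t :=
    fun t i j => hflow2 t i j ▸ (hW₂ i j t).hasDerivAt
  have hbal' : W₁ t * (W₁ t)ᴴ = (W₂ t)ᴴ * W₂ t := by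
    have := imbalance_eq_of_gradientFlow hW₁' hW₂' 0 t
    rwa [hbal, sub_self, sub_eq_zero] at this
  rw [sqrt_self_mul_conjTranspose_mul_of_balanced hbal',
    sqrt_conjTranspose_mul_self_mul_of_balanced hbal',
    (hasDerivAt_mul_apply_s11 (hW₂' t) (hW₁' t) a b).deriv]
  simp only [conjTranspose_eq_transpose_of_trivial, Matrix.neg_mul, Matrix.mul_neg,
    Matrix.mul_assoc]
  rw [add_comm, sub_eq_add_neg]

/-- Two-layer linear network under balanced gradient flow: if
`Ẇ₁ = −W₂ᵀ G`, `Ẇ₂ = −G W₁ᵀ` and `W₁(0)W₁(0)ᵀ = W₂(0)ᵀW₂(0)`, then the product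
`Π = W₂W₁` satisfies `Π̇ = −(ΠΠᵀ)^{1/2} G − G (ΠᵀΠ)^{1/2}` (entrywise derivatives,
positive semidefinite square roots). -/
theorem stmt11 {d h d' : ℕ}
    (W₁ : ℝ → Matrix (Fin h) (Fin d) ℝ) (W₂ : ℝ → Matrix (Fin d') (Fin h) ℝ)
    (G : ℝ → Matrix (Fin d') (Fin d) ℝ)
    (hG : ∀ a b, Continuous fun t => G t a b)
    (hW₁ : ∀ a b, Differentiable ℝ fun t => W₁ t a b)
    (hW₂ : ∀ a b, Differentiable ℝ fun t => W₂ t a b)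
    (hflow1 : ∀ t (a : Fin h) (b : Fin d),
      deriv (fun s => W₁ s a b) t = (-((W₂ t)ᵀ * G t)) a b)
    (hflow2 : ∀ t (a : Fin d') (b : Fin h),
      deriv (fun s => W₂ s a b) t = (-(G t * (W₁ t)ᵀ)) a b)
    (hbal : W₁ 0 * (W₁ 0)ᵀ = (W₂ 0)ᵀ * W₂ 0) :
    ∀ t (a : Fin d') (b : Fin d),
      deriv (fun s => (W₂ s * W₁ s) a b) t =
        (-((posSemidef_self_mul_conjTranspose (W₂ t * W₁ t)).sqrt * G t) -
          G t * (posSemidef_conjTranspose_mul_self (W₂ t * W₁ t)).sqrt) a b :=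
  stmt11_general W₁ W₂ G hW₁ hW₂ hflow1 hflow2 hbal
end
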